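/- arXiv:2207.05224 — 3 statements merged into one kernel-verified Lean document; each statement's English description precedes it below -/
import Mathlib

section
/- (Convergence of Clustered Value Iteration) Consider a finite MDP with nonnegative bounded rewards and discount $\gamma\in(0,1)$, with a product action space over clusters. Initialize $V_0 = 0$ and an arbitrary policy $\Pi^0$. At each iteration $k$, pick a cluster $c_k$, set $V_{k+1}(s) = \mathbf{T}^{c_k}_{\Pi^k} V_k(s)$ for all $s$, update the policy component for $c_k$ to a maximizer and keep other components fixed. Then the sequence $\{V_k(s)\}$ is monotonically nondecreasing and bounded for every $s$, and hence converges to some $\widehat{V} \in \mathbb{R}^{|\mathcal{S}|}$. -/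
/-!
Write `Q_V(s, a) = ∑ s', p(s'|s,a) (r(s,a) + γ V(s'))` for the one-step lookahead of a value
function `V`. The clustered update maximizes over candidates that include the current policy,
so `V_{k+1}(s) ≥ Q_{V_k}(s, Π^k(s))`, while the policy it installs attains
`V_{k+1}(s) = Q_{V_k}(s, Π^{k+1}(s))`. Since `Q` is monotone in `V`, induction gives
`V_k ≤ V_{k+1}`: `V_{k+2}(s) ≥ Q_{V_{k+1}}(s, Π^{k+1}(s)) ≥ Q_{V_k}(s, Π^{k+1}(s)) = V_{k+1}(s)`.
Likewise `Q_V ≤ R + γ M` whenever `V ≤ M`, and `M = R / (1 - γ)` is the fixed point of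
`M ↦ R + γ M`, so it bounds every iterate. A bounded monotone real sequence converges.
-/

open Filter Finset

section Lookahead

variable {S Act : Type*} [Fintype S] {p : S → Act → S → ℝ} {r : S → Act → ℝ} {γ : ℝ}

def lookahead (p : S → Act → S → ℝ) (r : S → Act → ℝ) (γ : ℝ) (V : S → ℝ) (s : S) (a : Act) :
    ℝ :=
  ∑ s', p s a s' * (r s a + γ * V s')

theorem lookahead_mono (hp : ∀ s a s', 0 ≤ p s a s') (hγ : 0 ≤ γ) {V W : S → ℝ} (hVW : V ≤ W)
    (s : S) (a : Act) : lookahead p r γ V s a ≤ lookahead p r γ W s a :=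
  sum_le_sum fun s' _ =>
    mul_le_mul_of_nonneg_left (by gcongr; exact hVW s') (hp s a s')

theorem lookahead_nonneg (hp : ∀ s a s', 0 ≤ p s a s') (hr : ∀ s a, 0 ≤ r s a) (hγ : 0 ≤ γ)
    {V : S → ℝ} (hV : 0 ≤ V) (s : S) (a : Act) : 0 ≤ lookahead p r γ V s a :=
  sum_nonneg fun s' _ => mul_nonneg (hp s a s') (add_nonneg (hr s a) (mul_nonneg hγ (hV s')))

theorem lookahead_le (hp : ∀ s a s', 0 ≤ p s a s') (hp_sum : ∀ s a, ∑ s', p s a s' = 1)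
    {R : ℝ} (hR : ∀ s a, r s a ≤ R) (hγ : 0 ≤ γ) {V : S → ℝ} {M : ℝ} (hV : ∀ s, V s ≤ M)
    (s : S) (a : Act) : lookahead p r γ V s a ≤ R + γ * M :=
  calc lookahead p r γ V s a ≤ ∑ s', p s a s' * (R + γ * M) :=
        sum_le_sum fun s' _ =>
          mul_le_mul_of_nonneg_left (add_le_add (hR s a) (by gcongr; exact hV s')) (hp s a s')
    _ = R + γ * M := by rw [← sum_mul, hp_sum, one_mul]

end Lookahead

section PolicyImprovement

variable {S Act : Type*} [Fintype S] {p : S → Act → S → ℝ} {r : S → Act → ℝ} {γ : ℝ}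
  {V : ℕ → S → ℝ} {Pi : ℕ → S → Act}

theorem monotone_of_policy_improvement (hp : ∀ s a s', 0 ≤ p s a s') (hr : ∀ s a, 0 ≤ r s a)
    (hγ : 0 ≤ γ) (hV0 : V 0 = 0)
    (hcurrent : ∀ k s, lookahead p r γ (V k) s (Pi k s) ≤ V (k + 1) s)
    (hgreedy : ∀ k s, lookahead p r γ (V k) s (Pi (k + 1) s) = V (k + 1) s) : Monotone V := by
  refine monotone_nat_of_le_succ fun k => ?_
  induction k with
  | zero =>
    intro s
    rw [hV0]
    exact (lookahead_nonneg hp hr hγ le_rfl s (Pi 0 s)).trans (hV0 ▸ hcurrent 0 s)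
  | succ k ih =>
    intro s
    calc V (k + 1) s = lookahead p r γ (V k) s (Pi (k + 1) s) := (hgreedy k s).symm
      _ ≤ lookahead p r γ (V (k + 1)) s (Pi (k + 1) s) := lookahead_mono hp hγ ih s _
      _ ≤ V (k + 1 + 1) s := hcurrent (k + 1) s

theorem le_div_one_sub_of_greedy (hp : ∀ s a s', 0 ≤ p s a s')
    (hp_sum : ∀ s a, ∑ s', p s a s' = 1) (hr : ∀ s a, 0 ≤ r s a) {R : ℝ} (hR : ∀ s a, r s a ≤ R)
    (hγ0 : 0 ≤ γ) (hγ1 : γ < 1) (hV0 : V 0 = 0)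
    (hgreedy : ∀ k s, lookahead p r γ (V k) s (Pi (k + 1) s) = V (k + 1) s) (k : ℕ) (s : S) :
    V k s ≤ R / (1 - γ) := by
  have hfix : R + γ * (R / (1 - γ)) = R / (1 - γ) := by
    field_simp [(sub_pos.2 hγ1).ne']
    ring
  induction k generalizing s with
  | zero =>
    rw [hV0]
    exact div_nonneg ((hr s (Pi 1 s)).trans (hR s _)) (sub_nonneg.2 hγ1.le)
  | succ k ih =>
    rw [← hgreedy k s, ← hfix]
    exact lookahead_le hp hp_sum hR hγ0 ih s _

end PolicyImprovement

theorem cvi_convergence_general {S C : Type*} [Fintype S]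
    [DecidableEq C]
    {A : C → Type*} [∀ c, Fintype (A c)]
    (p : S → (∀ c, A c) → S → ℝ) (hp_nonneg : ∀ s a s', 0 ≤ p s a s')
    (hp_sum : ∀ s a, ∑ s', p s a s' = 1)
    (r : S → (∀ c, A c) → ℝ) (hr_nonneg : ∀ s a, 0 ≤ r s a)
    (R : ℝ) (hR : ∀ s a, r s a ≤ R)
    (γ : ℝ) (hγ0 : 0 < γ) (hγ1 : γ < 1)
    (V : ℕ → S → ℝ) (hV0 : V 0 = 0)
    (Pi : ℕ → S → ∀ c, A c) (ck : ℕ → C)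
    (hVk : ∀ k s, V (k + 1) s =
      ⨆ αc : A (ck k), ∑ s', p s (Function.update (Pi k s) (ck k) αc) s' *
        (r s (Function.update (Pi k s) (ck k) αc) + γ * V k s'))
    (hmax : ∀ k s, ∑ s', p s (Pi (k + 1) s) s' * (r s (Pi (k + 1) s) + γ * V k s')
      = V (k + 1) s) :
    (∀ s, Monotone fun k => V k s) ∧ (∃ M : ℝ, ∀ k s, V k s ≤ M) ∧
      ∃ Vhat : S → ℝ, ∀ s, Tendsto (fun k => V k s) atTop (nhds (Vhat s)) := by
  have hcurrent : ∀ k s, lookahead p r γ (V k) s (Pi k s) ≤ V (k + 1) s := fun k s => by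
    have := le_ciSup (Set.finite_range fun αc : A (ck k) =>
      lookahead p r γ (V k) s (Function.update (Pi k s) (ck k) αc)).bddAbove (Pi k s (ck k))
    rw [Function.update_eq_self] at this
    exact this.trans_eq (hVk k s).symm
  have hmono : Monotone V :=
    monotone_of_policy_improvement hp_nonneg hr_nonneg hγ0.le hV0 hcurrent hmax
  have hbdd := le_div_one_sub_of_greedy hp_nonneg hp_sum hr_nonneg hR hγ0.le hγ1 hV0 hmax
  refine ⟨fun s _ _ hkl => hmono hkl s, ⟨_, hbdd⟩, fun s => ⨆ k, V k s, fun s => ?_⟩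
  exact tendsto_atTop_ciSup (fun _ _ hkl => hmono hkl s) ⟨_, Set.forall_mem_range.2 (hbdd · s)⟩

/-- Convergence of Clustered Value Iteration: the iterates are monotone, bounded,
and converge pointwise to some limit. -/
theorem cvi_convergence {S C : Type*} [Fintype S] [Nonempty S]
    [Fintype C] [DecidableEq C]
    {A : C → Type*} [∀ c, Fintype (A c)] [∀ c, Nonempty (A c)]
    (p : S → (∀ c, A c) → S → ℝ) (hp_nonneg : ∀ s a s', 0 ≤ p s a s')
    (hp_sum : ∀ s a, ∑ s', p s a s' = 1)
    (r : S → (∀ c, A c) → ℝ) (hr_nonneg : ∀ s a, 0 ≤ r s a)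
    (R : ℝ) (hR : ∀ s a, r s a ≤ R)
    (γ : ℝ) (hγ0 : 0 < γ) (hγ1 : γ < 1)
    (V : ℕ → S → ℝ) (hV0 : V 0 = 0)
    (Pi : ℕ → S → ∀ c, A c) (ck : ℕ → C)
    (hVk : ∀ k s, V (k + 1) s =
      ⨆ αc : A (ck k), ∑ s', p s (Function.update (Pi k s) (ck k) αc) s' *
        (r s (Function.update (Pi k s) (ck k) αc) + γ * V k s'))
    (hmax : ∀ k s, ∑ s', p s (Pi (k + 1) s) s' * (r s (Pi (k + 1) s) + γ * V k s')
      = V (k + 1) s)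
    (hkeep : ∀ k s c, c ≠ ck k → Pi (k + 1) s c = Pi k s c) :
    (∀ s, Monotone fun k => V k s) ∧ (∃ M : ℝ, ∀ k s, V k s ≤ M) ∧
      ∃ Vhat : S → ℝ, ∀ s, Tendsto (fun k => V k s) atTop (nhds (Vhat s)) :=
  cvi_convergence_general p hp_nonneg hp_sum r hr_nonneg R hR γ hγ0 hγ1 V hV0 Pi ck hVk hmax
end

section
/- (Monotone convergence for hybrid CVI/VI) Consider a finite MDP with nonnegative bounded rewards and discount $\gamma\in(0,1)$. Suppose a sequence $V_0 = 0, V_1, V_2, \dots$ is generated by interleaving clustered Bellman updates and full Bellman updates, such that each update is monotone nondecreasing and full Bellman updates $\mathbf{T}$ are applied infinitely often. Then $V_k \to V^*$, the optimal value, as $k \to \infty$. -/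
/-!
The Bellman operator `T` is monotone and moves by at most `γ * M` when its argument is raised by a
constant `M`. With `γ < 1` this gives a comparison principle: every subsolution `U ≤ T U` lies
below every supersolution `T W ≤ W`. As `0 ≤ T 0`, it puts `0 ≤ V*`, hence inductively every
`V k` below `V*`, so the nondecreasing iterates converge to some `L`. Along the infinitely many
full updates `V (k + 1) = T (V k)`, continuity of `T` gives `T L = L`, and comparison in both
directions forces `L = V*`.
-/

open Filter Topology Finset

noncomputable def bellman {S A : Type*} [Fintype S] (p : S → A → S → ℝ)
    (r : S → A → ℝ) (γ : ℝ) (V : S → ℝ) (s : S) : ℝ :=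
  ⨆ a : A, ∑ s', p s a s' * (r s a + γ * V s')

section Bellman

variable {S A : Type*} [Fintype S] [Finite A] {p : S → A → S → ℝ} {r : S → A → ℝ}
  {γ : ℝ}

theorem sum_le_bellman (V : S → ℝ) (s : S) (a : A) :
    ∑ s', p s a s' * (r s a + γ * V s') ≤ bellman p r γ V s :=
  le_ciSup (f := fun a => ∑ s', p s a s' * (r s a + γ * V s')) (Set.finite_range _).bddAbove a

theorem bellman_mono (hp : ∀ s a s', 0 ≤ p s a s') (hγ : 0 ≤ γ) :
    Monotone (bellman p r γ) :=
  fun _ _ hUW s => ciSup_mono (Set.finite_range _).bddAbove fun a =>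
    sum_le_sum fun s' _ => by gcongr; exacts [hp s a s', hUW s']

theorem zero_le_bellman_zero [Nonempty A] (hp : ∀ s a s', 0 ≤ p s a s')
    (hr : ∀ s a, 0 ≤ r s a) : 0 ≤ bellman p r γ 0 := fun s =>
  (sum_nonneg fun s' _ => by simpa using mul_nonneg (hp _ _ s') (hr _ _)).trans
    (sum_le_bellman 0 s (Classical.arbitrary A))

theorem bellman_le_bellman_add [Nonempty A] (hp : ∀ s a s', 0 ≤ p s a s')
    (hp_sum : ∀ s a, ∑ s', p s a s' = 1) (hγ : 0 ≤ γ) {U W : S → ℝ} {M : ℝ}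
    (h : ∀ s, U s ≤ W s + M) (s : S) :
    bellman p r γ U s ≤ bellman p r γ W s + γ * M := by
  refine ciSup_le fun a => ?_
  calc ∑ s', p s a s' * (r s a + γ * U s')
      ≤ ∑ s', p s a s' * (r s a + γ * (W s' + M)) :=
        sum_le_sum fun s' _ => by gcongr; exacts [hp s a s', h s']
    _ = ∑ s', p s a s' * (r s a + γ * W s') + γ * M := by
        simp only [mul_add, sum_add_distrib, ← sum_mul, hp_sum]
        ring
    _ ≤ bellman p r γ W s + γ * M := by grw [sum_le_bellman]

theorem le_of_le_bellman_of_bellman_le [Nonempty A] (hp : ∀ s a s', 0 ≤ p s a s')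
    (hp_sum : ∀ s a, ∑ s', p s a s' = 1) (hγ0 : 0 ≤ γ) (hγ1 : γ < 1) {U W : S → ℝ}
    (hU : U ≤ bellman p r γ U) (hW : bellman p r γ W ≤ W) : U ≤ W := by
  intro s
  have : Nonempty S := ⟨s⟩
  obtain ⟨s₀, hs₀⟩ := Finite.exists_max fun s => U s - W s
  set M := U s₀ - W s₀
  have hM : M ≤ γ * M := by
    have := bellman_le_bellman_add (r := r) hp hp_sum hγ0 (U := U) (W := W) (M := M)
      (fun s => by linarith [hs₀ s]) s₀
    linarith [hU s₀, hW s₀]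
  have : M ≤ 0 := by nlinarith
  linarith [hs₀ s]

theorem continuous_bellman [Nonempty A] : Continuous (bellman p r γ) := by
  have := Fintype.ofFinite A
  refine continuous_pi fun s => ?_
  simp only [bellman, ← sup'_univ_eq_ciSup]
  exact Continuous.finset_sup'_apply _ fun a _ => by fun_prop

end Bellman

theorem hybrid_cvi_vi_convergence_general {S A : Type*} [Fintype S] [Fintype A]
    [Nonempty A]
    (p : S → A → S → ℝ) (hp_nonneg : ∀ s a s', 0 ≤ p s a s')
    (hp_sum : ∀ s a, ∑ s', p s a s' = 1)
    (r : S → A → ℝ) (hr_nonneg : ∀ s a, 0 ≤ r s a)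
    (γ : ℝ) (hγ0 : 0 < γ) (hγ1 : γ < 1)
    (T : (S → ℝ) → (S → ℝ))
    (hT : ∀ V s, T V s = ⨆ a : A, ∑ s', p s a s' * (r s a + γ * V s'))
    (Vstar : S → ℝ) (hfix : T Vstar = Vstar)
    (V : ℕ → S → ℝ) (hV0 : V 0 = 0)
    (hmono : ∀ k s, V k s ≤ V (k + 1) s)
    (hdom : ∀ k s, V (k + 1) s ≤ T (V k) s)
    (hinf : ∀ m, ∃ k, m ≤ k ∧ V (k + 1) = T (V k)) :
    ∀ s, Tendsto (fun k => V k s) atTop (nhds (Vstar s)) := by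
  obtain rfl : T = bellman p r γ := funext fun U => funext (hT U)
  have hcomp {U W : S → ℝ} :=
    le_of_le_bellman_of_bellman_le (r := r) (U := U) (W := W) hp_nonneg hp_sum hγ0.le hγ1
  have hV_le (k : ℕ) : V k ≤ Vstar := by
    induction k with
    | zero => exact hV0 ▸ hcomp (zero_le_bellman_zero hp_nonneg hr_nonneg) hfix.le
    | succ k ih => exact fun s => (hdom k s).trans (hfix ▸ bellman_mono hp_nonneg hγ0.le ih s)
  have hV_lim : Tendsto V atTop (𝓝 (⨆ k, V k)) :=
    tendsto_atTop_ciSup (monotone_nat_of_le_succ hmono) ⟨Vstar, Set.forall_mem_range.2 hV_le⟩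
  set L := ⨆ k, V k
  have hL_fixed : bellman p r γ L = L :=
    tendsto_nhds_unique_of_frequently_eq ((continuous_bellman.tendsto L).comp hV_lim)
      (hV_lim.comp (tendsto_add_atTop_nat 1))
      (frequently_atTop.2 fun m => (hinf m).imp fun _ hk => ⟨hk.1, hk.2.symm⟩)
  have hL : L = Vstar := le_antisymm (hcomp hL_fixed.ge hfix.le) (hcomp hfix.ge hL_fixed.le)
  exact tendsto_pi_nhds.1 (hL ▸ hV_lim)

/-- Monotone convergence of the hybrid CVI/VI scheme to the optimal value. -/
theorem hybrid_cvi_vi_convergence {S A : Type*} [Fintype S] [Fintype A]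
    [Nonempty S] [Nonempty A]
    (p : S → A → S → ℝ) (hp_nonneg : ∀ s a s', 0 ≤ p s a s')
    (hp_sum : ∀ s a, ∑ s', p s a s' = 1)
    (r : S → A → ℝ) (hr_nonneg : ∀ s a, 0 ≤ r s a)
    (R : ℝ) (hR : ∀ s a, r s a ≤ R)
    (γ : ℝ) (hγ0 : 0 < γ) (hγ1 : γ < 1)
    (T : (S → ℝ) → (S → ℝ))
    (hT : ∀ V s, T V s = ⨆ a : A, ∑ s', p s a s' * (r s a + γ * V s'))
    (Vstar : S → ℝ) (hfix : T Vstar = Vstar)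
    (V : ℕ → S → ℝ) (hV0 : V 0 = 0)
    (hmono : ∀ k s, V k s ≤ V (k + 1) s)
    (hdom : ∀ k s, V (k + 1) s ≤ T (V k) s)
    (hinf : ∀ m, ∃ k, m ≤ k ∧ V (k + 1) = T (V k)) :
    ∀ s, Tendsto (fun k => V k s) atTop (nhds (Vstar s)) :=
  hybrid_cvi_vi_convergence_general p hp_nonneg hp_sum r hr_nonneg γ hγ0 hγ1 T hT Vstar hfix V hV0
    hmono hdom hinf
end

section
/- (Submodular values along the greedy splitting path) Let $f$ be a monotone submodular set function on subsets of a finite agent set $\mathcal{N}$ with $f(\emptyset) = 0$, and define the value of a partition $\mathcal{C}$ as $F(\mathcal{C}) = \sum_{U\in\mathcal{C}} f(U)$. Let $\widehat{\mathcal{C}}_1 = \{\mathcal{N}\}$ and, for $k \geq 2$, let $\widehat{\mathcal{C}}_k$ be obtained from $\widehat{\mathcal{C}}_{k-1}$ by greedily choosing the split of one block into two nonempty parts that maximizes the increase of $F$. Then the resulting sequence of values has diminishing returns: $F(\widehat{\mathcal{C}}_{k+1}) - F(\widehat{\mathcal{C}}_k) \leq F(\widehat{\mathcal{C}}_k) -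 F(\widehat{\mathcal{C}}_{k-1})$ for all $k \geq 1$ (with $F(\widehat{\mathcal{C}}_0) := 0$). -/
open Finset

/-- Monotonicity of marginals for a submodular function. -/
lemma gsplit_marginal_mono {N : Type*} [DecidableEq N] (f : Finset N → ℝ)
    (hsub : ∀ A B : Finset N, A ⊆ B → ∀ i ∉ B,
      f (insert i B) - f B ≤ f (insert i A) - f A) :
    ∀ (T A B : Finset N), A ⊆ B → Disjoint T B →
      f (B ∪ T) - f B ≤ f (A ∪ T) - f A := by
  intro T
  induction T using Finset.induction_on with
  | empty => intro A B hAB _; simp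
  | @insert i T hiT ih =>
    intro A B hAB hdisj
    have hiB : i ∉ B := (Finset.disjoint_insert_left.mp hdisj).1
    have hTB : Disjoint T B := (Finset.disjoint_insert_left.mp hdisj).2
    have hiBT : i ∉ B ∪ T := by simp [hiB, hiT]
    have h1 := hsub (A ∪ T) (B ∪ T) (Finset.union_subset_union hAB le_rfl) i hiBT
    have h2 := ih A B hAB hTB
    rw [Finset.union_insert, Finset.union_insert]
    linarith

/-- A good family: nonempty, pairwise disjoint blocks. -/
def GsplitGood {N : Type*} [DecidableEq N] (S : Finset (Finset N)) : Prop :=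
  (∀ U ∈ S, U ≠ ∅) ∧ ∀ U ∈ S, ∀ V ∈ S, U ≠ V → Disjoint U V

lemma gsplit_split_facts {N : Type*} [DecidableEq N] (S : Finset (Finset N))
    (hS : GsplitGood S) (U : Finset N) (hU : U ∈ S) (X : Finset N)
    (hXne : X ≠ ∅) (hXU : X ⊂ U) :
    GsplitGood (insert X (insert (U \ X) (S.erase U))) ∧
    ∀ f : Finset N → ℝ, (∑ V ∈ insert X (insert (U \ X) (S.erase U)), f V)
      = f X + f (U \ X) + (∑ V ∈ S, f V) - f U := by
  have hdXU : Disjoint X (U \ X) := Finset.disjoint_sdiff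
  have hUXne : U \ X ≠ ∅ :=
    (Finset.sdiff_nonempty.mpr hXU.not_subset).ne_empty
  have selfempty : ∀ A : Finset N, Disjoint A A → A = ∅ := fun A h =>
    Finset.eq_empty_of_forall_notMem fun x hx => (Finset.disjoint_left.mp h) hx hx
  have hXneUX : X ≠ U \ X := by
    intro h
    apply hXne
    rw [← h] at hdXU
    exact selfempty X hdXU
  have hdisjerase : ∀ V ∈ S.erase U, Disjoint V U := by
    intro V hV
    exact hS.2 V (Finset.mem_of_mem_erase hV) U hU (Finset.ne_of_mem_erase hV)
  have hXnotin : X ∉ S.erase U := by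
    intro h
    have : Disjoint X U := hdisjerase X h
    exact hXne (selfempty X (this.mono_right hXU.subset))
  have hUXnotin : U \ X ∉ S.erase U := by
    intro h
    have : Disjoint (U \ X) U := hdisjerase _ h
    exact hUXne (selfempty _ (this.mono_right Finset.sdiff_subset))
  have hXnotin2 : X ∉ insert (U \ X) (S.erase U) := by
    simp [hXneUX, hXnotin]
  constructor
  · constructor
    · intro V hV
      rcases Finset.mem_insert.mp hV with rfl | hV
      · exact hXne
      rcases Finset.mem_insert.mp hV with rfl | hV
      · exact hUXne
      · exact hS.1 V (Finset.mem_of_mem_erase hV)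
    · intro V hV W hW hVW
      have hkey : ∀ V, V ∈ insert X (insert (U \ X) (S.erase U)) →
          V ⊆ U ∨ V ∈ S.erase U := by
        intro V hV
        rcases Finset.mem_insert.mp hV with rfl | hV
        · exact Or.inl hXU.subset
        rcases Finset.mem_insert.mp hV with rfl | hV
        · exact Or.inl Finset.sdiff_subset
        · exact Or.inr hV
      rcases Finset.mem_insert.mp hV with rfl | hV'
      · rcases Finset.mem_insert.mp hW with rfl | hW'
        · exact absurd rfl hVW
        rcases Finset.mem_insert.mp hW' with rfl | hW''
        · exact hdXU
        · exact ((hdisjerase W hW'').mono_right hXU.subset).symm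
      rcases Finset.mem_insert.mp hV' with rfl | hV''
      · rcases Finset.mem_insert.mp hW with rfl | hW'
        · exact hdXU.symm
        rcases Finset.mem_insert.mp hW' with rfl | hW''
        · exact absurd rfl hVW
        · exact ((hdisjerase W hW'').mono_right Finset.sdiff_subset).symm
      · rcases Finset.mem_insert.mp hW with rfl | hW'
        · exact (hdisjerase V hV'').mono_right hXU.subset
        rcases Finset.mem_insert.mp hW' with rfl | hW''
        · exact (hdisjerase V hV'').mono_right Finset.sdiff_subset
        · exact hS.2 V (Finset.mem_of_mem_erase hV'') W
            (Finset.mem_of_mem_erase hW'') hVW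
  · intro f
    rw [Finset.sum_insert hXnotin2, Finset.sum_insert hUXnotin,
      Finset.sum_erase_eq_sub hU]
    ring

/-- The invariant: each `𝒞 k` for `1 ≤ k ≤ C` is a good family. -/
lemma gsplit_invariant {N : Type*} [Fintype N] [DecidableEq N]
    (C : ℕ) (𝒞 : ℕ → Finset (Finset N))
    (h1 : 𝒞 1 = {Finset.univ})
    (huniv : (Finset.univ : Finset N) ≠ ∅)
    (hgreedy : ∀ k, 2 ≤ k → k ≤ C →
      ∃ U ∈ 𝒞 (k - 1), ∃ X : Finset N, X ≠ ∅ ∧ X ⊂ U ∧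
        𝒞 k = insert X (insert (U \ X) ((𝒞 (k - 1)).erase U))) :
    ∀ k, 1 ≤ k → k ≤ C → GsplitGood (𝒞 k) := by
  intro k
  induction k with
  | zero => omega
  | succ n ih =>
    intro _ hC
    rcases Nat.eq_zero_or_pos n with rfl | hn
    · rw [h1]
      refine ⟨?_, ?_⟩
      · intro U hU
        simp only [Finset.mem_singleton] at hU
        subst hU; exact huniv
      · intro U hU V hV hUV
        simp only [Finset.mem_singleton] at hU hV
        exact absurd (hU.trans hV.symm) hUV
    · obtain ⟨U, hU, X, hXne, hXU, heq⟩ := hgreedy (n + 1) (by omega) hC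
      simp only [Nat.add_sub_cancel] at hU heq
      have hgood := ih hn (by omega)
      rw [heq]
      exact (gsplit_split_facts (𝒞 n) hgood U hU X hXne hXU).1

/-- Submodular values along the greedy splitting path: for a monotone submodular
set function `f` with `f ∅ = 0`, the partition values produced by greedy
splitting have diminishing returns. -/
theorem greedy_splitting_submodular_values {N : Type*} [Fintype N] [DecidableEq N]
    (f : Finset N → ℝ)
    (hmono : ∀ A B : Finset N, A ⊆ B → f A ≤ f B)
    (hsub : ∀ A B : Finset N, A ⊆ B → ∀ i ∉ B,
      f (insert i B) - f B ≤ f (insert i A) - f A)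
    (hempty : f ∅ = 0)
    (C : ℕ)
    (𝒞 : ℕ → Finset (Finset N))
    (h0 : 𝒞 0 = ∅)
    (h1 : 𝒞 1 = {Finset.univ})
    (hgreedy : ∀ k, 2 ≤ k → k ≤ C →
      ∃ U ∈ 𝒞 (k - 1), ∃ X : Finset N, X ≠ ∅ ∧ X ⊂ U ∧
        𝒞 k = insert X (insert (U \ X) ((𝒞 (k - 1)).erase U)) ∧
        ∀ U' ∈ 𝒞 (k - 1), ∀ X' : Finset N, X' ≠ ∅ → X' ⊂ U' →
          f X' + f (U' \ X') - f U' ≤ f X + f (U \ X) - f U) :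
    ∀ k, 1 ≤ k → k + 1 ≤ C →
      (∑ U ∈ 𝒞 (k + 1), f U) - (∑ U ∈ 𝒞 k, f U) ≤
        (∑ U ∈ 𝒞 k, f U) - (∑ U ∈ 𝒞 (k - 1), f U) := by
  intro k hk1 hkC
  -- univ is nonempty (otherwise no valid split at step 2 exists)
  have hC2 : 2 ≤ C := by omega
  have huniv : (Finset.univ : Finset N) ≠ ∅ := by
    obtain ⟨U, hU, X, hXne, hXU, _⟩ := hgreedy 2 le_rfl hC2
    rw [show (2 : ℕ) - 1 = 1 from rfl, h1, Finset.mem_singleton] at hU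
    subst hU
    intro h
    exact hXne (Finset.subset_empty.mp (h ▸ hXU.subset))
  have hinv := gsplit_invariant C 𝒞 h1 huniv
    (fun k hk hkC => by
      obtain ⟨U, hU, X, hXne, hXU, heq, _⟩ := hgreedy k hk hkC
      exact ⟨U, hU, X, hXne, hXU, heq⟩)
  -- the split at step k+1
  obtain ⟨U', hU', X', hX'ne, hX'U', heq', hmax'⟩ :=
    hgreedy (k + 1) (by omega) hkC
  simp only [Nat.add_sub_cancel] at hU' heq' hmax'
  have hgoodk : GsplitGood (𝒞 k) := hinv k hk1 (by omega)
  have hsum' := (gsplit_split_facts (𝒞 k) hgoodk U' hU' X' hX'ne hX'U').2 f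
  rw [heq', hsum']
  -- now reduce to: f X' + f (U' \ X') - f U' ≤ F(𝒞 k) - F(𝒞 (k-1))
  rcases Nat.eq_or_lt_of_le hk1 with h1k | hk2
  · -- k = 1
    subst h1k
    rw [h1, Finset.mem_singleton] at hU'
    subst hU'
    rw [show (1 : ℕ) - 1 = 0 from rfl, h0, h1]
    simp only [Finset.sum_empty, Finset.sum_singleton]
    have m1 := hmono X' (Finset.univ) (Finset.subset_univ _)
    have m2 := hmono (Finset.univ \ X') (Finset.univ) (Finset.subset_univ _)
    linarith
  · -- k ≥ 2
    obtain ⟨U, hU, X, hXne, hXU, heq, hmax⟩ := hgreedy k hk2 (by omega)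
    have hgoodk1 : GsplitGood (𝒞 (k - 1)) := hinv (k - 1) (by omega) (by omega)
    have hsum := (gsplit_split_facts (𝒞 (k - 1)) hgoodk1 U hU X hXne hXU).2 f
    rw [heq, hsum]
    -- goal: f X' + f (U'\X') - f U' ≤ f X + f (U\X) - f U (modulo arithmetic)
    have key : f X' + f (U' \ X') - f U' ≤ f X + f (U \ X) - f U := by
      rw [heq] at hU'
      rcases Finset.mem_insert.mp hU' with rfl | hU'2
      · -- U' = X : split of the new block X
        have hW : U' ⊂ U := hXU
        have hcand := hmax U hU X' hX'ne (hX'U'.trans hW)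
        have hdisj : Disjoint X' (U \ X') := Finset.disjoint_sdiff
        have hmarg := gsplit_marginal_mono f hsub X' (U' \ X') (U \ X')
          (Finset.sdiff_subset_sdiff hW.subset le_rfl) Finset.sdiff_disjoint.symm
        rw [Finset.sdiff_union_of_subset (hX'U'.subset.trans hW.subset),
          Finset.sdiff_union_of_subset hX'U'.subset] at hmarg
        linarith
      rcases Finset.mem_insert.mp hU'2 with rfl | hU'3
      · -- U' = U \ X : split of the other new block
        have hW : U \ X ⊂ U :=
          Finset.sdiff_ssubset hXU.subset (Finset.nonempty_iff_ne_empty.mpr hXne)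
        have hcand := hmax U hU X' hX'ne (hX'U'.trans hW)
        have hmarg := gsplit_marginal_mono f hsub X' ((U \ X) \ X') (U \ X')
          (Finset.sdiff_subset_sdiff hW.subset le_rfl) Finset.sdiff_disjoint.symm
        rw [Finset.sdiff_union_of_subset (hX'U'.subset.trans hW.subset),
          Finset.sdiff_union_of_subset hX'U'.subset] at hmarg
        linarith
      · -- U' is an old block
        exact hmax U' (Finset.mem_of_mem_erase hU'3) X' hX'ne hX'U'
    linarith
end
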